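/- arXiv:2404.08461 — 2 statements merged into one kernel-verified Lean document; each statement's English description precedes it below -/
import Mathlib

section
/- Let n, K be positive integers, let μ ∈ ℝ^n with μ_i = 1/n, and let s : [n] × [K] → (0,1) be scores with ∑_j s(i,j)=1 for each i and no ties (s(i,j) ≠ s(i,j') for j ≠ j'). Define ŷ(i) = argmax_j s(i,j), let ν ∈ ℝ^K be given by ν_j = (1/n)·|{i : ŷ(i)=j}|, and let C_{ij} = -log s(i,j). Then the matrix π defined by π_{ij} = (1/n)·𝟙[ŷ(i)=j] is an optimal solution of min_{γ ≥ 0, γ𝟙 = μ, γᵀ𝟙 = ν} ⟨γ, C⟩, and for every optimal solution π of this problem, argmax_j π_{ij} = ŷ(i) for all i. -/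
open Finset

/-- Classification as optimal transport: the plan induced by argmax predictions is
optimal for the OT problem with target marginal the empirical prediction distribution,
and every optimal plan has argmax equal to the argmax predictions. -/
theorem classification_as_ot
    (n K : ℕ) (hn : 0 < n) (hK : 0 < K)
    (s : Fin n → Fin K → ℝ)
    (hs : ∀ i j, 0 < s i j ∧ s i j < 1)
    (hsum : ∀ i, ∑ j, s i j = 1)
    (hnoties : ∀ i, ∀ j j' : Fin K, j ≠ j' → s i j ≠ s i j')
    (yhat : Fin n → Fin K)
    (hyhat : ∀ i, ∀ j : Fin K, j ≠ yhat i → s i j < s i (yhat i))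
    (ν : Fin K → ℝ)
    (hν : ∀ j, ν j = ((Finset.univ.filter (fun i => yhat i = j)).card : ℝ) / n)
    (C : Fin n → Fin K → ℝ) (hC : ∀ i j, C i j = - Real.log (s i j))
    (π : Fin n → Fin K → ℝ)
    (hπ : ∀ i j, π i j = if yhat i = j then (1 : ℝ) / n else 0) :
    ((∀ i j, 0 ≤ π i j) ∧ (∀ i, ∑ j, π i j = 1 / n) ∧ (∀ j, ∑ i, π i j = ν j) ∧
      (∀ γ : Fin n → Fin K → ℝ, (∀ i j, 0 ≤ γ i j) → (∀ i, ∑ j, γ i j = 1 / n) →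
        (∀ j, ∑ i, γ i j = ν j) →
        ∑ i, ∑ j, π i j * C i j ≤ ∑ i, ∑ j, γ i j * C i j)) ∧
    (∀ π' : Fin n → Fin K → ℝ, (∀ i j, 0 ≤ π' i j) → (∀ i, ∑ j, π' i j = 1 / n) →
      (∀ j, ∑ i, π' i j = ν j) →
      (∀ γ : Fin n → Fin K → ℝ, (∀ i j, 0 ≤ γ i j) → (∀ i, ∑ j, γ i j = 1 / n) →
        (∀ j, ∑ i, γ i j = ν j) →
        ∑ i, ∑ j, π' i j * C i j ≤ ∑ i, ∑ j, γ i j * C i j) →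
      ∀ i, ∀ j : Fin K, j ≠ yhat i → π' i j < π' i (yhat i)) := by
  have hnR : (0:ℝ) < n := by exact_mod_cast hn
  -- cost comparison within each row
  have hCle : ∀ i j, C i (yhat i) ≤ C i j := by
    intro i j
    rcases eq_or_ne j (yhat i) with h | h
    · rw [h]
    · rw [hC, hC]
      have h1 := (hs i j).1
      have := Real.log_lt_log h1 (hyhat i j h)
      linarith
  have hClt : ∀ i j, j ≠ yhat i → C i (yhat i) < C i j := by
    intro i j h
    rw [hC, hC]
    have h1 := (hs i j).1
    have := Real.log_lt_log h1 (hyhat i j h)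
    linarith
  have hπnn : ∀ i j, 0 ≤ π i j := by
    intro i j; rw [hπ]; split
    · positivity
    · exact le_refl 0
  have hπrow : ∀ i, ∑ j, π i j = 1 / n := by
    intro i
    simp only [hπ]
    rw [Finset.sum_ite_eq]
    simp
  have hπcol : ∀ j, ∑ i, π i j = ν j := by
    intro j
    rw [hν]
    have : ∑ i, π i j = ∑ i ∈ univ.filter (fun i => yhat i = j), (1:ℝ)/n := by
      rw [Finset.sum_filter]
      exact Finset.sum_congr rfl fun i _ => hπ i j
    rw [this, Finset.sum_const, nsmul_eq_mul]
    ring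
  have hcostπ : ∑ i, ∑ j, π i j * C i j = ∑ i, (1/n : ℝ) * C i (yhat i) := by
    refine Finset.sum_congr rfl fun i _ => ?_
    have h1 : ∀ j, π i j * C i j = if yhat i = j then (1/n : ℝ) * C i j else 0 := by
      intro j; rw [hπ]; split <;> simp
    rw [Finset.sum_congr rfl fun j _ => h1 j, Finset.sum_ite_eq]
    simp
  -- the fundamental cost decomposition
  have hdiff : ∀ γ : Fin n → Fin K → ℝ, (∀ i, ∑ j, γ i j = 1 / n) →
      ∑ i, ∑ j, γ i j * C i j
        = ∑ i, ∑ j, π i j * C i j + ∑ i, ∑ j, γ i j * (C i j - C i (yhat i)) := by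
    intro γ hg
    rw [hcostπ, ← Finset.sum_add_distrib]
    refine Finset.sum_congr rfl fun i _ => ?_
    have h1 : ∑ j, γ i j * (C i j - C i (yhat i))
        = (∑ j, γ i j * C i j) - (1/n : ℝ) * C i (yhat i) := by
      simp only [mul_sub]
      rw [Finset.sum_sub_distrib, ← Finset.sum_mul, hg i]
    rw [h1]; ring
  have hpen : ∀ γ : Fin n → Fin K → ℝ, (∀ i j, 0 ≤ γ i j) →
      0 ≤ ∑ i, ∑ j, γ i j * (C i j - C i (yhat i)) := by
    intro γ hg
    refine Finset.sum_nonneg fun i _ => Finset.sum_nonneg fun j _ => ?_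
    exact mul_nonneg (hg i j) (sub_nonneg.2 (hCle i j))
  refine ⟨⟨hπnn, hπrow, hπcol, ?_⟩, ?_⟩
  · intro γ nn row col
    rw [hdiff γ row]
    linarith [hpen γ nn]
  · intro π' nn' row' col' opt' i j hj
    have h1 : ∑ i, ∑ j, π' i j * C i j ≤ ∑ i, ∑ j, π i j * C i j :=
      opt' π hπnn hπrow hπcol
    have h2 := hdiff π' row'
    have hpen0 : ∑ i, ∑ j, π' i j * (C i j - C i (yhat i)) = 0 := by
      have := hpen π' nn'
      linarith
    have houter := (Finset.sum_eq_zero_iff_of_nonneg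
      (fun i _ => Finset.sum_nonneg fun j _ =>
        mul_nonneg (nn' i j) (sub_nonneg.2 (hCle i j)))).1 hpen0
    have hterm : ∀ i' j', π' i' j' * (C i' j' - C i' (yhat i')) = 0 := by
      intro i' j'
      exact (Finset.sum_eq_zero_iff_of_nonneg
        (fun j _ => mul_nonneg (nn' i' j) (sub_nonneg.2 (hCle i' j)))).1
        (houter i' (mem_univ i')) j' (mem_univ j')
    have hz : ∀ j', j' ≠ yhat i → π' i j' = 0 := by
      intro j' hj'
      rcases mul_eq_zero.1 (hterm i j') with h | h
      · exact h
      · have := hClt i j' hj'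
        linarith
    have hval : π' i (yhat i) = 1 / n := by
      have hs1 : ∑ j, π' i j = π' i (yhat i) :=
        Finset.sum_eq_single_of_mem (yhat i) (mem_univ _) (fun b _ hb => hz b hb)
      rw [← hs1, row' i]
    rw [hz j hj, hval]
    positivity
end

section
/- Let P_s, P_t be discrete joint distributions on [n] × [K] with P_s(X=i|Y=j) = P_t(X=i|Y=j) for all i,j, all probabilities strictly positive, and suppose for each i the target posteriors P_t(Y=j|X=i) are pairwise distinct across j. Let ŷ*(i) = argmax_j P_t(Y=j|X=i) be the Bayes-optimal target predictions, ν* ∈ ℝ^K defined by ν*_j = (1/n)·|{i : ŷ*(i)=j}|, μ = (1/n)𝟙, and C_{ij} = -log P_s(Y=j|X=i). Then for any optimal plan π of min_{γ ∈ Π(μ,ν*)} ⟨γ,C⟩, we have argmax_j π_{ij} = ŷ*(i) for all i ∈ [n]. -/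
open Finset

/-- Label shift invariance: OT with the source-calibrated cost and the true target
label distribution recovers the Bayes-optimal target classifier. -/
theorem label_shift_invariance
    (n K : ℕ) (hn : 0 < n) (hK : 0 < K)
    (Ps Pt : Fin n → Fin K → ℝ)
    (hPs_pos : ∀ i j, 0 < Ps i j) (hPt_pos : ∀ i j, 0 < Pt i j)
    (hPs_sum : ∑ i, ∑ j, Ps i j = 1) (hPt_sum : ∑ i, ∑ j, Pt i j = 1)
    -- label shift: P_s(X=i|Y=j) = P_t(X=i|Y=j)
    (hshift : ∀ i j, Ps i j / (∑ i', Ps i' j) = Pt i j / (∑ i', Pt i' j))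
    -- target posteriors pairwise distinct in j for each i
    (hdistinct : ∀ i, ∀ j j' : Fin K, j ≠ j' →
      Pt i j / (∑ j'', Pt i j'') ≠ Pt i j' / (∑ j'', Pt i j''))
    (ystar : Fin n → Fin K)
    (hystar : ∀ i, ∀ j : Fin K, j ≠ ystar i →
      Pt i j / (∑ j'', Pt i j'') < Pt i (ystar i) / (∑ j'', Pt i j''))
    (νstar : Fin K → ℝ)
    (hνstar : ∀ j, νstar j = ((Finset.univ.filter (fun i => ystar i = j)).card : ℝ) / n)
    (C : Fin n → Fin K → ℝ)
    (hC : ∀ i j, C i j = - Real.log (Ps i j / (∑ j', Ps i j'))) :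
    ∀ π : Fin n → Fin K → ℝ,
      (∀ i j, 0 ≤ π i j) → (∀ i, ∑ j, π i j = 1 / n) → (∀ j, ∑ i, π i j = νstar j) →
      (∀ γ : Fin n → Fin K → ℝ, (∀ i j, 0 ≤ γ i j) → (∀ i, ∑ j, γ i j = 1 / n) →
        (∀ j, ∑ i, γ i j = νstar j) →
        ∑ i, ∑ j, π i j * C i j ≤ ∑ i, ∑ j, γ i j * C i j) →
      ∀ i, ∀ j : Fin K, j ≠ ystar i → π i j < π i (ystar i) := by
  intro π hπ0 hrow hcol hopt
  haveI : Nonempty (Fin K) := ⟨⟨0, hK⟩⟩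
  haveI : Nonempty (Fin n) := ⟨⟨0, hn⟩⟩
  have hnR : (0:ℝ) < (n:ℝ) := by exact_mod_cast hn
  -- positivity of marginals
  have hRs : ∀ i, 0 < ∑ j', Ps i j' := fun i =>
    Finset.sum_pos (fun j _ => hPs_pos i j) Finset.univ_nonempty
  have hRt : ∀ i, 0 < ∑ j', Pt i j' := fun i =>
    Finset.sum_pos (fun j _ => hPt_pos i j) Finset.univ_nonempty
  have hSs : ∀ j, 0 < ∑ i', Ps i' j := fun j =>
    Finset.sum_pos (fun i _ => hPs_pos i j) Finset.univ_nonempty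
  have hSt : ∀ j, 0 < ∑ i', Pt i' j := fun j =>
    Finset.sum_pos (fun i _ => hPt_pos i j) Finset.univ_nonempty
  -- the target-posterior cost
  set D : Fin n → Fin K → ℝ := fun i j => - Real.log (Pt i j / (∑ j', Pt i j')) with hD
  set f : Fin n → ℝ := fun i =>
    Real.log (∑ j', Ps i j') - Real.log (∑ j', Pt i j') with hf
  set g : Fin K → ℝ := fun j =>
    Real.log (∑ i', Pt i' j) - Real.log (∑ i', Ps i' j) with hg
  -- logs from label shift
  have hlog : ∀ i j, Real.log (Ps i j) - Real.log (∑ i', Ps i' j)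
      = Real.log (Pt i j) - Real.log (∑ i', Pt i' j) := by
    intro i j
    rw [← Real.log_div (ne_of_gt (hPs_pos i j)) (ne_of_gt (hSs j)),
        ← Real.log_div (ne_of_gt (hPt_pos i j)) (ne_of_gt (hSt j)), hshift i j]
  have hCD : ∀ i j, C i j = D i j + f i + g j := by
    intro i j
    have h := hlog i j
    rw [hC i j, Real.log_div (ne_of_gt (hPs_pos i j)) (ne_of_gt (hRs i))]
    simp only [hD, hf, hg]
    rw [Real.log_div (ne_of_gt (hPt_pos i j)) (ne_of_gt (hRt i))]
    linarith
  -- cost decomposition on the transport polytope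
  have key : ∀ γ : Fin n → Fin K → ℝ, (∀ i, ∑ j, γ i j = 1 / n) →
      (∀ j, ∑ i, γ i j = νstar j) →
      ∑ i, ∑ j, γ i j * C i j
        = (∑ i, ∑ j, γ i j * D i j) + (1 / n) * ∑ i, f i + ∑ j, νstar j * g j := by
    intro γ hr hc
    have h1 : ∀ i j, γ i j * C i j = γ i j * D i j + γ i j * f i + γ i j * g j := by
      intro i j; rw [hCD]; ring
    simp_rw [h1, Finset.sum_add_distrib]
    have h2 : ∑ i, ∑ j, γ i j * f i = (1 / n) * ∑ i, f i := by
      rw [Finset.mul_sum]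
      refine Finset.sum_congr rfl fun i _ => ?_
      rw [← Finset.sum_mul, hr i]
    have h3 : ∑ i, ∑ j, γ i j * g j = ∑ j, νstar j * g j := by
      rw [Finset.sum_comm]
      refine Finset.sum_congr rfl fun j _ => ?_
      rw [← Finset.sum_mul, hc j]
    rw [h2, h3]
  -- the deterministic plan
  set γs : Fin n → Fin K → ℝ := fun i j => if ystar i = j then 1 / n else 0 with hγs
  have hγ0 : ∀ i j, 0 ≤ γs i j := by
    intro i j; simp only [hγs]; split <;> positivity
  have hγr : ∀ i, ∑ j, γs i j = 1 / n := by
    intro i; simp [hγs]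
  have hγc : ∀ j, ∑ i, γs i j = νstar j := by
    intro j
    rw [hνstar j]
    simp only [hγs]
    rw [← Finset.sum_filter, Finset.sum_const, nsmul_eq_mul]
    ring
  -- cost of the deterministic plan under D
  have hγD : ∑ i, ∑ j, γs i j * D i j = ∑ i, (1 / n) * D i (ystar i) := by
    refine Finset.sum_congr rfl fun i _ => ?_
    simp [hγs, ite_mul, Finset.sum_ite_eq]
  -- optimality transfers to D
  have hoptD : ∑ i, ∑ j, π i j * D i j ≤ ∑ i, (1 / n) * D i (ystar i) := by
    have h := hopt γs hγ0 hγr hγc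
    rw [key π hrow hcol, key γs hγr hγc, hγD] at h
    linarith
  -- row-wise strict minimality of D at ystar
  have hDmin : ∀ i j, D i (ystar i) ≤ D i j := by
    intro i j
    by_cases h : j = ystar i
    · rw [h]
    · have := hystar i j h
      have hpos : 0 < Pt i j / ∑ j'', Pt i j'' := div_pos (hPt_pos i j) (hRt i)
      have := Real.log_lt_log hpos this
      simp only [hD]
      linarith
  have hDstrict : ∀ i j, j ≠ ystar i → D i (ystar i) < D i j := by
    intro i j h
    have hlt := hystar i j h
    have hpos : 0 < Pt i j / ∑ j'', Pt i j'' := div_pos (hPt_pos i j) (hRt i)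
    have := Real.log_lt_log hpos hlt
    simp only [hD]
    linarith
  -- the slack sum is zero
  have hterm0 : ∀ i ∈ Finset.univ, ∀ j ∈ (Finset.univ : Finset (Fin K)),
      π i j * (D i j - D i (ystar i)) = 0 := by
    have hsum0 : ∑ i, ∑ j, π i j * (D i j - D i (ystar i)) = 0 := by
      have hle : ∑ i, ∑ j, π i j * (D i j - D i (ystar i)) ≤ 0 := by
        have e1 : ∀ i, ∑ j, π i j * (D i j - D i (ystar i))
            = (∑ j, π i j * D i j) - (1 / n) * D i (ystar i) := by
          intro i
          simp_rw [mul_sub, Finset.sum_sub_distrib, ← Finset.sum_mul, hrow i]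
        simp_rw [e1, Finset.sum_sub_distrib]
        linarith
      have hge : 0 ≤ ∑ i, ∑ j, π i j * (D i j - D i (ystar i)) := by
        refine Finset.sum_nonneg fun i _ => Finset.sum_nonneg fun j _ => ?_
        exact mul_nonneg (hπ0 i j) (by linarith [hDmin i j])
      linarith
    have h := (Finset.sum_eq_zero_iff_of_nonneg (fun i _ =>
      Finset.sum_nonneg fun j _ => mul_nonneg (hπ0 i j)
        (by linarith [hDmin i j]))).mp hsum0
    intro i hi j hj
    exact (Finset.sum_eq_zero_iff_of_nonneg fun j _ => mul_nonneg (hπ0 i j)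
      (by linarith [hDmin i j])).mp (h i hi) j hj
  -- off-diagonal entries vanish
  have hπzero : ∀ i j, j ≠ ystar i → π i j = 0 := by
    intro i j h
    have h0 := hterm0 i (Finset.mem_univ i) j (Finset.mem_univ j)
    rcases mul_eq_zero.mp h0 with h' | h'
    · exact h'
    · exact absurd h' (by have := hDstrict i j h; intro hc; linarith)
  -- conclude
  intro i j hj
  have hdiag : π i (ystar i) = 1 / n := by
    have := hrow i
    rw [Finset.sum_eq_single (ystar i) (fun b _ hb => hπzero i b hb)
      (fun h => absurd (Finset.mem_univ _) h)] at this
    exact this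
  rw [hπzero i j hj, hdiag]
  positivity
end
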